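/- Fix x ∈ (0,1]. For any word w ∈ Ω_n(x) and any base β > β̲(w), the word w is admissible in base β, i.e., w ∈ Σ_n(β). -/

import Mathlib

open MeasureTheory Set
open scoped Classical

/-- The beta-transformation `T_β x = βx - ⌊βx⌋`. -/
noncomputable def betaT (β x : ℝ) : ℝ := Int.fract (β * x)

/-- The `k`-th digit (0-indexed) of the β-expansion of `x`: `ε_{k+1}(x,β) = ⌊β T_β^k x⌋`. -/
noncomputable def betaDigit (β x : ℝ) (k : ℕ) : ℕ := ⌊β * (betaT β)^[k] x⌋₊

/-- `Σ_n(β)`: admissible words of length `n`, i.e. prefixes of β-expansions of points of `[0,1)`. -/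
def admWords (β : ℝ) (n : ℕ) : Set (Fin n → ℕ) :=
  {w | ∃ x ∈ Set.Ico (0:ℝ) 1, ∀ i : Fin n, w i = betaDigit β x i}

/-- The cylinder `𝔍(w)` of points of `[0,1)` whose β-expansion starts with `w`. -/
def cyl (β : ℝ) {n : ℕ} (w : Fin n → ℕ) : Set ℝ :=
  {x | x ∈ Set.Ico (0:ℝ) 1 ∧ ∀ i : Fin n, betaDigit β x i = w i}

/-- `Ξ_n(β)`: admissible words of length `n` whose cylinder is full (of length `β^{-n}`). -/
def fullWords (β : ℝ) (n : ℕ) : Set (Fin n → ℕ) :=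
  {w | w ∈ admWords β n ∧ volume (cyl β w) = ENNReal.ofReal (1 / β ^ n)}

/-- `ε(β)`: the β-expansion of 1 (0-indexed). -/
noncomputable def eps1 (β : ℝ) (k : ℕ) : ℕ := betaDigit β 1 k

/-- `ε*(β)`: the infinite β-expansion of 1.  If `ε(β)` has a last nonzero digit at
(0-indexed) position `N`, it is the periodic sequence `(ε_0 ⋯ ε_{N-1} (ε_N - 1))^∞`;
otherwise it is `ε(β)` itself. -/

noncomputable def epsStar (β : ℝ) : ℕ → ℕ :=
  if h : ∃ N, eps1 β N ≠ 0 ∧ ∀ k, N < k → eps1 β k = 0 then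
    fun k => if k % (h.choose + 1) = h.choose then eps1 β h.choose - 1
             else eps1 β (k % (h.choose + 1))
  else eps1 β

/-- Strict lexicographic order on sequences of nonnegative integers. -/
def lexLt (a b : ℕ → ℕ) : Prop := ∃ i, (∀ j, j < i → a j = b j) ∧ a i < b i

/-- Strict lexicographic order on words of length `n`. -/
def wordLt {n : ℕ} (a b : Fin n → ℕ) : Prop :=
  ∃ i : Fin n, (∀ j, j < i → a j = b j) ∧ a i < b i

/-- `Ω_n(x)`: all length-`n` prefixes of β-expansions of `x` over all bases `β > 1`. -/
def prefWords (x : ℝ) (n : ℕ) : Set (Fin n → ℕ) :=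
  {w | ∃ β : ℝ, 1 < β ∧ ∀ i : Fin n, w i = betaDigit β x i}

/-- The parameter cylinder `I(w) = {β > 1 : ε_1(x,β)⋯ε_n(x,β) = w}`. -/
def pcyl (x : ℝ) {n : ℕ} (w : Fin n → ℕ) : Set ℝ :=
  {β | 1 < β ∧ ∀ i : Fin n, betaDigit β x i = w i}

/-- `Λ_n(x)`: words whose parameter cylinder is full, i.e. `{T_β^n x : β ∈ I(w)} = [0,1)`. -/
def pfull (x : ℝ) (n : ℕ) : Set (Fin n → ℕ) :=
  {w | w ∈ prefWords x n ∧ (fun β => (betaT β)^[n] x) '' pcyl x w = Set.Ico (0:ℝ) 1}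

/-!
Let `β₀ > 1` be a base in which `x` has digits `w`, and let `t_k(b)` be the value in base `b` of the
tail `w_{k+1} ⋯ w_n`. A word all of whose tails satisfy `t_k(β) < 1` is the digit word of
`t_0(β) ∈ [0, 1)`. The value of a nonzero word strictly decreases with the base, and the
greedy expansion gives `t_0(β₀) ≤ x = t_0(β̲)`, so `β̲ ≤ β₀`. Comparing
`x = Σ_{i ≤ k} w_i β̲^{-i} + t_k(β̲) β̲^{-k}` with the greedy remainder `T_{β₀}^k x ∈ [0, 1)`
then gives `t_k(β̲) ≤ 1`, and finally `β t_k(β) ≤ β̲ t_k(β̲) ≤ β̲ < β`.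
-/

open Finset

lemma betaDigit_succ (β x : ℝ) (k : ℕ) :
    betaDigit β x (k + 1) = betaDigit β (betaT β x) k := by
  rw [betaDigit, betaDigit, Function.iterate_succ_apply]

lemma betaDigit_zero_add_betaT {β x : ℝ} (h : 0 ≤ β * x) :
    (betaDigit β x 0 : ℝ) + betaT β x = β * x := by
  rw [betaDigit, betaT, Function.iterate_zero_apply, natCast_floor_eq_intCast_floor h,
    Int.floor_add_fract]

lemma iterate_betaT_nonneg {β x : ℝ} (hx : 0 ≤ x) : ∀ k, 0 ≤ (betaT β)^[k] x
  | 0 => hx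
  | k + 1 => by rw [Function.iterate_succ_apply']; exact Int.fract_nonneg _

lemma iterate_succ_betaT_lt_one (β x : ℝ) (k : ℕ) : (betaT β)^[k + 1] x < 1 := by
  rw [Function.iterate_succ_apply']
  exact Int.fract_lt_one _

lemma zero_mem_admWords (β : ℝ) (n : ℕ) : (0 : Fin n → ℕ) ∈ admWords β n := by
  have hT : betaT β 0 = 0 := by simp [betaT]
  refine ⟨0, ⟨le_rfl, one_pos⟩, fun i => ?_⟩
  simp [betaDigit, Function.iterate_fixed hT]

noncomputable def wordValue (d : ℕ → ℕ) (b : ℝ) (m : ℕ) : ℝ :=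
  ∑ i ∈ range m, (d i : ℝ) / b ^ (i + 1)

section wordValue

variable (d : ℕ → ℕ) {b b' : ℝ} (m : ℕ)

lemma wordValue_nonneg (hb : 0 ≤ b) : 0 ≤ wordValue d b m :=
  sum_nonneg fun _ _ => by positivity

lemma wordValue_succ :
    wordValue d b (m + 1) = (d 0 + wordValue (fun i => d (i + 1)) b m) / b := by
  simp only [wordValue, sum_range_succ', add_div, sum_div, div_div, pow_succ]
  simp [add_comm]

lemma wordValue_add (k : ℕ) :
    wordValue d b (k + m) = wordValue d b k + wordValue (fun i => d (k + i)) b m / b ^ k := by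
  simp only [wordValue, sum_range_add, sum_div, div_div, ← pow_add]
  simp only [add_comm k, add_assoc]

lemma mul_wordValue_antitone (hb : 0 < b) (hbb' : b ≤ b') :
    b' * wordValue d b' m ≤ b * wordValue d b m := by
  have key : ∀ c : ℝ, 0 < c → c * wordValue d c m = ∑ i ∈ range m, (d i : ℝ) / c ^ i := by
    intro c hc
    rw [wordValue, mul_sum]
    refine sum_congr rfl fun i _ => ?_
    rw [pow_succ']
    field_simp
  rw [key b' (hb.trans_le hbb'), key b hb]
  gcongr

lemma wordValue_antitone (hb : 0 < b) (hbb' : b ≤ b') :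
    wordValue d b' m ≤ wordValue d b m := by
  have h := mul_wordValue_antitone d m hb hbb'
  have h' : b * wordValue d b' m ≤ b' * wordValue d b' m :=
    mul_le_mul_of_nonneg_right hbb' (wordValue_nonneg d m (hb.le.trans hbb'))
  exact le_of_mul_le_mul_left (h'.trans h) hb

lemma wordValue_strictAnti (hb : 0 < b) (hbb' : b < b') (hd : ∃ i < m, d i ≠ 0) :
    wordValue d b' m < wordValue d b m := by
  obtain ⟨i, hi, hdi⟩ := hd
  refine sum_lt_sum (fun j _ => by gcongr) ⟨i, mem_range.mpr hi, ?_⟩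
  have : (0 : ℝ) < d i := by exact_mod_cast Nat.pos_of_ne_zero hdi
  gcongr

lemma wordValue_lt_one_of_lt (hb : 0 < b) (hbb' : b < b') (h : wordValue d b m ≤ 1) :
    wordValue d b' m < 1 := by
  have h₁ := mul_wordValue_antitone d m hb hbb'.le
  have h₂ : b * wordValue d b m ≤ b := mul_le_of_le_one_right hb.le h
  exact (mul_lt_iff_lt_one_right (hb.trans hbb')).mp (by linarith)

end wordValue

section greedy

variable {β x : ℝ}

lemma eq_wordValue_betaDigit_add (hβ : 0 < β) (hx : 0 ≤ x) (k : ℕ) :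
    x = wordValue (betaDigit β x) β k + (betaT β)^[k] x / β ^ k := by
  induction k generalizing x with
  | zero => simp [wordValue]
  | succ k ih =>
    have hy := ih (x := betaT β x) (Int.fract_nonneg (β * x))
    have hdig := betaDigit_zero_add_betaT (mul_nonneg hβ.le hx)
    rw [wordValue_succ, funext (betaDigit_succ β x), Function.iterate_succ_apply, pow_succ]
    calc x = (betaDigit β x 0 + betaT β x) / β := by rw [hdig]; field_simp
      _ = _ := by nth_rw 1 [hy]; ring

lemma wordValue_betaDigit_le (hβ : 0 < β) (hx : 0 ≤ x) (k : ℕ) :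
    wordValue (betaDigit β x) β k ≤ x := by
  have h := eq_wordValue_betaDigit_add hβ hx k
  have : 0 ≤ (betaT β)^[k] x / β ^ k := by
    have := iterate_betaT_nonneg (β := β) hx k
    positivity
  linarith

lemma lt_wordValue_betaDigit_add (hβ : 0 < β) (hx : 0 ≤ x) (k : ℕ) :
    x < wordValue (betaDigit β x) β (k + 1) + 1 / β ^ (k + 1) := by
  have h := eq_wordValue_betaDigit_add hβ hx (k + 1)
  have : (betaT β)^[k + 1] x / β ^ (k + 1) < 1 / β ^ (k + 1) := by
    gcongr
    exact iterate_succ_betaT_lt_one β x k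
  linarith

end greedy

lemma betaDigit_wordValue {b : ℝ} (hb : 0 < b) {m : ℕ} {d : ℕ → ℕ}
    (h : ∀ k ≤ m, wordValue (fun j => d (k + j)) b (m - k) < 1) :
    ∀ i < m, betaDigit b (wordValue d b m) i = d i := by
  induction m generalizing d with
  | zero => intro i hi; omega
  | succ m ih =>
    set y := wordValue (fun i => d (i + 1)) b m
    have hy : y ∈ Set.Ico (0 : ℝ) 1 :=
      ⟨wordValue_nonneg _ _ hb.le, by simpa [add_comm 1] using h 1 (by omega)⟩
    have hby : b * wordValue d b (m + 1) = d 0 + y := by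
      rw [wordValue_succ]
      field_simp
      rfl
    rintro (_ | i) hi
    · rw [betaDigit, Function.iterate_zero_apply, hby, add_comm, Nat.floor_add_natCast hy.1,
        Nat.floor_eq_zero.mpr hy.2, zero_add]
    · have hT : betaT b (wordValue d b (m + 1)) = y := by
        rw [betaT, hby, Int.fract_natCast_add, Int.fract_eq_self.mpr hy]
      rw [betaDigit_succ, hT]
      refine ih (fun k hk => ?_) i (by omega)
      simpa only [Nat.add_sub_add_right, Nat.add_right_comm k 1] using h (k + 1) (by omega)

lemma mem_admWords_of_wordValue_lt_one {b : ℝ} (hb : 0 < b) {m : ℕ} {d : ℕ → ℕ}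
    (h : ∀ k ≤ m, wordValue (fun j => d (k + j)) b (m - k) < 1) :
    (fun i : Fin m => d i) ∈ admWords b m :=
  ⟨wordValue d b m, ⟨wordValue_nonneg d m hb.le, by simpa using h 0 (Nat.zero_le m)⟩,
    fun i => (betaDigit_wordValue hb h i i.isLt).symm⟩

section root

variable {β₀ x b : ℝ} {n : ℕ}

lemma le_of_eq_wordValue_betaDigit (hβ₀ : 0 < β₀) (hx : 0 ≤ x)
    (hxb : x = wordValue (betaDigit β₀ x) b n) (hd : ∃ i < n, betaDigit β₀ x i ≠ 0) :
    b ≤ β₀ := by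
  by_contra! h
  have := wordValue_strictAnti _ n hβ₀ h hd
  have := wordValue_betaDigit_le hβ₀ hx n
  linarith

lemma wordValue_tail_le_one (hβ₀ : 0 < β₀) (hx : 0 ≤ x) (hb : 0 < b)
    (hxb : x = wordValue (betaDigit β₀ x) b n) (hbβ₀ : b ≤ β₀) (hx₁ : x ≤ 1) {k : ℕ}
    (hk : k ≤ n) :
    wordValue (fun j => betaDigit β₀ x (k + j)) b (n - k) ≤ 1 := by
  set d := betaDigit β₀ x
  obtain _ | k := k
  · simpa [← hxb] using hx₁
  have hsplit := wordValue_add d (n - (k + 1)) (b := b) (k + 1)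
  rw [Nat.add_sub_cancel' hk, ← hxb] at hsplit
  have hgreedy := lt_wordValue_betaDigit_add hβ₀ hx k
  have hhead := wordValue_antitone d (k + 1) hb hbβ₀
  have hpow : 1 / β₀ ^ (k + 1) ≤ 1 / b ^ (k + 1) := by gcongr
  have hbk : 0 < b ^ (k + 1) := by positivity
  have : wordValue (fun j => d (k + 1 + j)) b (n - (k + 1)) / b ^ (k + 1) < 1 / b ^ (k + 1) := by
    linarith
  exact ((div_lt_div_iff_of_pos_right hbk).mp this).le

end root

theorem prefWord_admissible (x : ℝ) (hx : x ∈ Set.Ioc (0:ℝ) 1) (n : ℕ)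
    (w : Fin n → ℕ) (hw : w ∈ prefWords x n) (βw : ℝ)
    (hβw : (w = 0 ∧ βw = 1) ∨
      (w ≠ 0 ∧ 0 < βw ∧ x = ∑ i : Fin n, (w i : ℝ) / βw ^ ((i : ℕ) + 1)))
    (β : ℝ) (hβ : βw < β) : w ∈ admWords β n := by
  obtain ⟨hx₀, hx₁⟩ := hx
  rcases hβw with ⟨rfl, -⟩ | ⟨hw₀, hβw, hxw⟩
  · exact zero_mem_admWords β n
  obtain ⟨β₀, hβ₀, hdig⟩ := hw
  obtain rfl : w = fun i : Fin n => betaDigit β₀ x i := funext hdig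
  have hβ₀ : 0 < β₀ := one_pos.trans hβ₀
  have hxw : x = wordValue (betaDigit β₀ x) βw n :=
    hxw.trans (Fin.sum_univ_eq_sum_range (fun i => (betaDigit β₀ x i : ℝ) / βw ^ (i + 1)) n)
  have hd : ∃ i < n, betaDigit β₀ x i ≠ 0 := by
    obtain ⟨i, hi⟩ := Function.ne_iff.mp hw₀
    exact ⟨i, i.isLt, hi⟩
  have hβwβ₀ := le_of_eq_wordValue_betaDigit hβ₀ hx₀.le hxw hd
  exact mem_admWords_of_wordValue_lt_one (hβw.trans hβ) fun k hk =>
    wordValue_lt_one_of_lt _ _ hβw hβ (wordValue_tail_le_one hβ₀ hx₀.le hβw hxw hβwβ₀ hx₁ hk)
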